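/- arXiv:1911.03309 — 3 statements merged into one kernel-verified Lean document; each statement's English description precedes it below -/
import Mathlib

section
/- Let Φ be an irreducible root system in ℚ-vector space V with base Δ and lowest root α₀, and let s be an element of the adjoint torus T̂ (i.e., a homomorphism from the root lattice to ℂ×) of finite order d. Define 𝔖 = {α ∈ Φ : α(s) = ζ_d} for a fixed primitive d-th root of unity ζ_d. Suppose s satisfies α(s) = 1 for α ∈ Δ_a \ 𝒪 and α(s) = ζ_d for α ∈ 𝒪, where 𝒪 ⊆ Δ_a is nonempty with d = Σ_{α ∈ 𝒪} d(α). Then for every β ∈ 𝔖 there exists α ∈ 𝒪 with α ≤_{B'} β, where α ≤_{B'} β means β − α is a nonnegative integer combination of elements of Δ_a \ 𝒪. -/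
/-!
Write `Δ_a = {α₀} ∪ Δ`. Every root is `∑_{γ ∈ Δ_a} m(γ) γ` with `0 ≤ m(γ) ≤ d(γ)`: a positive
root keeps its coefficients on `Δ`, which the highest root bounds, and a negative root
`-∑ c(δ) δ` equals `α₀ + ∑ (d(δ) - c(δ)) δ`. Then `β(s) = ζ ^ k` with `k = ∑_{γ ∈ 𝒪} m(γ) ≤ d`,
so `β(s) = ζ` forces `k = 1`, unless `d = 1` and `k = 0`; in that case adding the relation
`∑ d(γ) γ = 0` to the coefficients makes `k = 1`. When `k = 1`, the unique `α ∈ 𝒪` with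
`m(α) ≠ 0` has `β - α = ∑_{γ ∈ Δ_a \ 𝒪} m(γ) γ`.
-/

open Finset

/-- A (crystallographic, reduced, irreducible) root system in a `ℚ`-vector space,
encoded by its set of roots together with a choice of coroots. -/
structure RootSystemData (V : Type*) [AddCommGroup V] [Module ℚ V] where
  Φ : Set V
  coroot : V → V →ₗ[ℚ] ℚ
  finite : Φ.Finite
  ne_zero : ∀ α ∈ Φ, α ≠ (0 : V)
  span_eq_top : Submodule.span ℚ Φ = ⊤
  coroot_self : ∀ α ∈ Φ, coroot α α = 2
  reflect_mem : ∀ α ∈ Φ, ∀ β ∈ Φ, β - coroot α β • α ∈ Φ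
  crystallographic : ∀ α ∈ Φ, ∀ β ∈ Φ, ∃ n : ℤ, coroot α β = (n : ℚ)
  reduced : ∀ α ∈ Φ, ∀ t : ℚ, t • α ∈ Φ → t = 1 ∨ t = -1
  irreducible : ∀ Φ₁ Φ₂ : Set V, Φ₁ ∪ Φ₂ = Φ → Φ₁ ∩ Φ₂ = ∅ →
    (∀ α ∈ Φ₁, ∀ β ∈ Φ₂, coroot α β = 0) → Φ₁ = ∅ ∨ Φ₂ = ∅

variable {V : Type*} [AddCommGroup V] [Module ℚ V]

/-- `Δ` is a base (set of simple roots) of the root system: it is linearly independent and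
every root is a nonnegative or nonpositive integer combination of the simple roots. -/
def RootSystemData.IsBase (R : RootSystemData V) (Δ : Finset V) : Prop :=
  (↑Δ : Set V) ⊆ R.Φ ∧ LinearIndependent ℚ (fun a : {x : V // x ∈ Δ} => (a : V)) ∧
    ∀ β ∈ R.Φ, (∃ c : V → ℕ, β = ∑ α ∈ Δ, (c α : ℚ) • α) ∨
      (∃ c : V → ℕ, β = -∑ α ∈ Δ, (c α : ℚ) • α)

/-- `β` is a positive root with respect to the base `Δ`. -/
def RootSystemData.IsPos (R : RootSystemData V) (Δ : Finset V) (β : V) : Prop :=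
  β ∈ R.Φ ∧ ∃ c : V → ℕ, β = ∑ α ∈ Δ, (c α : ℚ) • α

/-- `θ` is the highest root with respect to `Δ`: a positive root which dominates
every positive root for the dominance order. -/
def RootSystemData.IsHighest (R : RootSystemData V) (Δ : Finset V) (θ : V) : Prop :=
  R.IsPos Δ θ ∧ ∀ β : V, R.IsPos Δ β → ∃ c : V → ℕ, θ - β = ∑ α ∈ Δ, (c α : ℚ) • α

theorem eq_of_sum_smul_eq_of_linearIndependent {V : Type*} [AddCommGroup V] [Module ℚ V]
    {Δ : Finset V} (hΔ : LinearIndependent ℚ (fun a : {x : V // x ∈ Δ} => (a : V)))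
    {f g : V → ℚ}
    (hfg : ∑ δ ∈ Δ, f δ • δ = ∑ δ ∈ Δ, g δ • δ) : ∀ δ ∈ Δ, f δ = g δ := by
  have hli : LinearIndepOn ℚ id (Δ : Set V) := hΔ
  intro δ hδ
  refine sub_eq_zero.mp (linearIndepOn_finset_iff.mp hli (f - g) ?_ δ hδ)
  simp only [Pi.sub_apply, sub_smul, Finset.sum_sub_distrib, id, hfg, sub_self]

theorem map_sum_natCast_smul {V M : Type*} [AddCommGroup V] [Module ℚ V] [CommGroup M]
    {s : V → M} (hs : ∀ x y : V, s (x + y) = s x * s y) (A : Finset V) (m : V → ℕ) :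
    s (∑ γ ∈ A, (m γ : ℚ) • γ) = ∏ γ ∈ A, s γ ^ m γ := by
  let f : V →+ Additive M := AddMonoidHom.mk' (fun x => Additive.ofMul (s x)) hs
  change (f _).toMul = _
  simp only [map_sum, Nat.cast_smul_eq_nsmul, map_nsmul, toMul_sum, toMul_nsmul]
  rfl

theorem prod_pow_eq_pow_sum_of_subset {ι M : Type*} [CommMonoid M] [DecidableEq ι]
    {A O : Finset ι} (hOA : O ⊆ A) {s : ι → M} {ζ : M} (hs1 : ∀ α ∈ A \ O, s α = 1)
    (hsζ : ∀ α ∈ O, s α = ζ) (m : ι → ℕ) : ∏ γ ∈ A, s γ ^ m γ = ζ ^ ∑ γ ∈ O, m γ := by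
  rw [← Finset.prod_sdiff hOA, Finset.prod_eq_one fun γ hγ => by rw [hs1 γ hγ, one_pow],
    one_mul, ← Finset.prod_pow_eq_pow_sum]
  exact Finset.prod_congr rfl fun γ hγ => by rw [hsζ γ hγ]

theorem IsPrimitiveRoot.eq_one_or_of_pow_eq_self {M : Type*} [CommGroup M] {ζ : M} {d k : ℕ}
    (hζ : IsPrimitiveRoot ζ d) (hkd : k ≤ d) (hk : ζ ^ k = ζ) : k = 1 ∨ (k = 0 ∧ d = 1) := by
  rcases k with _ | j
  · rw [pow_zero, eq_comm] at hk
    exact Or.inr ⟨rfl, hζ.unique (hk ▸ IsPrimitiveRoot.one)⟩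
  · rw [pow_succ, mul_eq_right] at hk
    exact Or.inl (by rw [Nat.eq_zero_of_dvd_of_lt (hζ.dvd_of_pow_eq_one j hk) (by omega)])

theorem exists_mem_sub_eq_sum_sdiff {V : Type*} [AddCommGroup V] [Module ℚ V] [DecidableEq V]
    {A O : Finset V} (hOA : O ⊆ A) {m : V → ℕ} (hm : ∑ γ ∈ O, m γ = 1) :
    ∃ α ∈ O, ∑ γ ∈ A, (m γ : ℚ) • γ - α = ∑ γ ∈ A \ O, (m γ : ℚ) • γ := by
  obtain ⟨α, hαO, hα⟩ := Finset.exists_ne_zero_of_sum_ne_zero (hm ▸ one_ne_zero)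
  have hsplit := Finset.add_sum_erase O m hαO
  have hmα : m α = 1 := by omega
  have hrest : ∀ γ ∈ O, γ ≠ α → m γ = 0 := fun γ hγ hγα =>
    Finset.sum_eq_zero_iff.mp (by omega) γ (Finset.mem_erase.mpr ⟨hγα, hγ⟩)
  have hO : ∑ γ ∈ O, (m γ : ℚ) • γ = α := by
    rw [Finset.sum_eq_single_of_mem α hαO fun γ hγ hγα => by simp [hrest γ hγ hγα], hmα,
      Nat.cast_one, one_smul]
  refine ⟨α, hαO, ?_⟩
  rw [← Finset.sum_sdiff hOA, hO, add_sub_cancel_right]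

namespace RootSystemData

variable {V : Type*} [AddCommGroup V] [Module ℚ V]

theorem neg_mem (R : RootSystemData V) {β : V} (hβ : β ∈ R.Φ) : -β ∈ R.Φ := by
  have h := R.reflect_mem β hβ β hβ
  rwa [R.coroot_self β hβ, two_smul, sub_add_cancel_left] at h

theorem IsHighest.coeff_le {R : RootSystemData V} {Δ : Finset V}
    (hΔ : LinearIndependent ℚ (fun a : {x : V // x ∈ Δ} => (a : V))) {θ : V}
    (hθ : R.IsHighest Δ θ) {dm : V → ℕ} (hdθ : θ = ∑ α ∈ Δ, (dm α : ℚ) • α) {c : V → ℕ}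
    (hc : ∑ α ∈ Δ, (c α : ℚ) • α ∈ R.Φ) : ∀ δ ∈ Δ, c δ ≤ dm δ := by
  obtain ⟨e, he⟩ := hθ.2 _ ⟨hc, c, rfl⟩
  have hsum : ∑ α ∈ Δ, (dm α : ℚ) • α = ∑ α ∈ Δ, ((c α : ℚ) + e α) • α := by
    simp only [add_smul, Finset.sum_add_distrib, ← he, ← hdθ, add_sub_cancel]
  intro δ hδ
  have := eq_of_sum_smul_eq_of_linearIndependent hΔ hsum δ hδ
  exact_mod_cast (show (c δ : ℚ) ≤ dm δ by linarith [(e δ).cast_nonneg (α := ℚ)])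

variable {R : RootSystemData V} {Δ : Finset V} {θ α₀ : V} {dm : V → ℕ} [DecidableEq V]

theorem sum_insert_lowestRoot_marks_smul (hα₀ : α₀ = -θ) (hα₀Δ : α₀ ∉ Δ) (hd0 : dm α₀ = 1)
    (hdθ : θ = ∑ α ∈ Δ, (dm α : ℚ) • α) : ∑ γ ∈ insert α₀ Δ, (dm γ : ℚ) • γ = 0 := by
  rw [Finset.sum_insert hα₀Δ, hd0, Nat.cast_one, one_smul, hα₀, ← hdθ, neg_add_cancel]

theorem IsBase.exists_affine_coeff_le (hΔ : R.IsBase Δ) (hθ : R.IsHighest Δ θ) (hα₀ : α₀ = -θ)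
    (hα₀Δ : α₀ ∉ Δ) (hd0 : dm α₀ = 1) (hdθ : θ = ∑ α ∈ Δ, (dm α : ℚ) • α) {β : V}
    (hβ : β ∈ R.Φ) : ∃ m : V → ℕ,
      β = ∑ γ ∈ insert α₀ Δ, (m γ : ℚ) • γ ∧ ∀ γ ∈ insert α₀ Δ, m γ ≤ dm γ := by
  have hsum (a : ℕ) (c : V → ℕ) :
      ∑ γ ∈ insert α₀ Δ, ((if γ = α₀ then a else c γ : ℕ) : ℚ) • γ =
        (a : ℚ) • α₀ + ∑ γ ∈ Δ, (c γ : ℚ) • γ := by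
    rw [Finset.sum_insert hα₀Δ, if_pos rfl]
    exact congrArg _ <| Finset.sum_congr rfl fun γ hγ => by
      rw [if_neg (ne_of_mem_of_not_mem hγ hα₀Δ)]
  have hle {a : ℕ} {c : V → ℕ} (ha : a ≤ 1) (hc : ∀ δ ∈ Δ, c δ ≤ dm δ) :
      ∀ γ ∈ insert α₀ Δ, (if γ = α₀ then a else c γ) ≤ dm γ := by
    intro γ hγ
    rcases Finset.mem_insert.mp hγ with rfl | hγ
    · rwa [if_pos rfl, hd0]
    · rw [if_neg (ne_of_mem_of_not_mem hγ hα₀Δ)]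
      exact hc γ hγ
  rcases hΔ.2.2 β hβ with ⟨c, rfl⟩ | ⟨c, rfl⟩
  · refine ⟨fun γ => if γ = α₀ then 0 else c γ, ?_, hle zero_le_one (hθ.coeff_le hΔ.2.1 hdθ hβ)⟩
    rw [hsum, Nat.cast_zero, zero_smul, zero_add]
  · have hc := hθ.coeff_le hΔ.2.1 hdθ (neg_neg (∑ α ∈ Δ, (c α : ℚ) • α) ▸ R.neg_mem hβ)
    refine ⟨fun γ => if γ = α₀ then 1 else dm γ - c γ, ?_, hle le_rfl fun δ _ => Nat.sub_le _ _⟩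
    have hsub : ∑ γ ∈ Δ, ((dm γ - c γ : ℕ) : ℚ) • γ = θ - ∑ γ ∈ Δ, (c γ : ℚ) • γ := by
      rw [hdθ, ← Finset.sum_sub_distrib]
      exact Finset.sum_congr rfl fun γ hγ => by rw [Nat.cast_sub (hc γ hγ), sub_smul]
    rw [hsum, hsub, Nat.cast_one, one_smul, hα₀]
    abel

end RootSystemData

theorem stmt_9_general {V : Type*} [AddCommGroup V] [Module ℚ V] [DecidableEq V]
    (R : RootSystemData V) (Δ : Finset V) (hΔ : R.IsBase Δ)
    (θ : V) (hθ : R.IsHighest Δ θ)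
    (α₀ : V) (hα₀ : α₀ = -θ) (hα₀Δ : α₀ ∉ Δ)
    (dm : V → ℕ) (hd0 : dm α₀ = 1) (hdθ : θ = ∑ α ∈ Δ, (dm α : ℚ) • α)
    (O : Finset V) (hOsub : O ⊆ insert α₀ Δ)
    (d : ℕ) (hd : d = ∑ α ∈ O, dm α)
    (ζ : ℂˣ) (hζ : IsPrimitiveRoot ζ d)
    (s : V → ℂˣ) (hs : ∀ x y : V, s (x + y) = s x * s y)
    (hs1 : ∀ α ∈ insert α₀ Δ \ O, s α = 1)
    (hsζ : ∀ α ∈ O, s α = ζ) :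
    ∀ β ∈ R.Φ, s β = ζ →
      ∃ α ∈ O, ∃ c : V → ℕ, β - α = ∑ γ ∈ insert α₀ Δ \ O, (c γ : ℚ) • γ := by
  intro β hβ hsβ
  obtain ⟨m, rfl, hm⟩ := hΔ.exists_affine_coeff_le hθ hα₀ hα₀Δ hd0 hdθ hβ
  have hkd : ∑ γ ∈ O, m γ ≤ d := hd ▸ Finset.sum_le_sum fun γ hγ => hm γ (hOsub hγ)
  rw [map_sum_natCast_smul hs, prod_pow_eq_pow_sum_of_subset hOsub hs1 hsζ] at hsβ
  rcases hζ.eq_one_or_of_pow_eq_self hkd hsβ with hk | ⟨hk, hd1⟩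
  · obtain ⟨α, hαO, hα⟩ := exists_mem_sub_eq_sum_sdiff hOsub hk
    exact ⟨α, hαO, m, hα⟩
  · have hk' : ∑ γ ∈ O, (m + dm) γ = 1 := by
      simp only [Pi.add_apply, Finset.sum_add_distrib, hk, ← hd, hd1, zero_add]
    obtain ⟨α, hαO, hα⟩ := exists_mem_sub_eq_sum_sdiff hOsub hk'
    refine ⟨α, hαO, m + dm, ?_⟩
    rw [← hα]
    simp only [Pi.add_apply, Nat.cast_add, add_smul, Finset.sum_add_distrib,
      RootSystemData.sum_insert_lowestRoot_marks_smul hα₀ hα₀Δ hd0 hdθ, add_zero]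

/-- For $s$ of order $d = \sum_{\alpha\in\mathcal{O}} d(\alpha)$ determined by a nonempty
$\mathcal{O}\subseteq\Delta_a$ ($\alpha(s)=\zeta_d$ on $\mathcal{O}$, $\alpha(s)=1$ on
$\Delta_a\setminus\mathcal{O}$), every root $\beta$ with $\beta(s)=\zeta_d$ lies above
some $\alpha\in\mathcal{O}$ for the order $\le_{B'}$. -/
theorem stmt_9 {V : Type*} [AddCommGroup V] [Module ℚ V] [DecidableEq V]
    (R : RootSystemData V) (Δ : Finset V) (hΔ : R.IsBase Δ)
    (θ : V) (hθ : R.IsHighest Δ θ)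
    (α₀ : V) (hα₀ : α₀ = -θ) (hα₀Δ : α₀ ∉ Δ)
    (dm : V → ℕ) (hd0 : dm α₀ = 1) (hdθ : θ = ∑ α ∈ Δ, (dm α : ℚ) • α)
    (O : Finset V) (hOsub : O ⊆ insert α₀ Δ) (hOne : O.Nonempty)
    (d : ℕ) (hd : d = ∑ α ∈ O, dm α)
    (ζ : ℂˣ) (hζ : IsPrimitiveRoot ζ d)
    (s : V → ℂˣ) (hs : ∀ x y : V, s (x + y) = s x * s y)
    (hs1 : ∀ α ∈ insert α₀ Δ \ O, s α = 1)
    (hsζ : ∀ α ∈ O, s α = ζ) :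
    ∀ β ∈ R.Φ, s β = ζ →
      ∃ α ∈ O, ∃ c : V → ℕ, β - α = ∑ γ ∈ insert α₀ Δ \ O, (c γ : ℚ) • γ :=
  stmt_9_general R Δ hΔ θ hθ α₀ hα₀ hα₀Δ dm hd0 hdθ O hOsub d hd ζ hζ s hs hs1 hsζ
end

section
/- Let Φ be an irreducible root system with base Δ, lowest root α₀, marks d(α) (d(α₀) = 1), and let 𝒪 ⊆ Δ_a be nonempty with d̲ = Σ_{α ∈ 𝒪} d(α). Let s ∈ Hom(ℤΦ, ℂ×) have finite order d, and suppose α(s) = 1 for α ∈ Δ_a \ 𝒪 and α(s) = ζ_d^k for all α ∈ 𝒪, for some k ∈ {1,…,d−1}. If every root that is a ℤ-combination of Δ_a \ 𝒪 satisfies α(s) = 1 and this set is exactly {α ∈ Φ : α(s) = 1}, then d divides d̲, k is coprime to d, and d = d̲. -/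
open Finset

variable {V : Type*} [AddCommGroup V] [Module ℚ V]

namespace RootSystemData

variable (R : RootSystemData V)

/-- Reflection along `α` as a linear map. -/
def σ (α : V) : V →ₗ[ℚ] V := LinearMap.id - (R.coroot α).smulRight α

lemma σ_apply (α x : V) : R.σ α x = x - R.coroot α x • α := rfl

lemma σ_invol {α : V} (hα : α ∈ R.Φ) (x : V) : R.σ α (R.σ α x) = x := by
  simp only [σ_apply, map_sub, map_smul, R.coroot_self α hα, smul_eq_mul]
  module

lemma σ_mem {α β : V} (hα : α ∈ R.Φ) (hβ : β ∈ R.Φ) : R.σ α β ∈ R.Φ :=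
  R.reflect_mem α hα β hβ

lemma neg_mem_s14 {α : V} (hα : α ∈ R.Φ) : -α ∈ R.Φ := by
  have := R.reflect_mem α hα α hα
  rwa [R.coroot_self α hα, show α - (2:ℚ) • α = -α by module] at this

lemma coroot_unique {α : V} (hα : α ∈ R.Φ) (f : V →ₗ[ℚ] ℚ) (hf2 : f α = 2)
    (hf : ∀ β ∈ R.Φ, β - f β • α ∈ R.Φ) : f = R.coroot α := by
  set g := R.coroot α with hg
  have hα0 : α ≠ 0 := R.ne_zero α hα
  -- the "unipotent" u x = x + (g x - f x) • α maps Φ to Φ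
  have hu : ∀ x ∈ R.Φ, x + (g x - f x) • α ∈ R.Φ := by
    intro x hx
    have h1 : x - g x • α ∈ R.Φ := R.reflect_mem α hα x hx
    have h2 := hf _ h1
    have : f (x - g x • α) = f x - 2 * g x := by
      simp [map_sub, map_smul, hf2, smul_eq_mul]; ring
    rw [this] at h2
    convert h2 using 1; module
  have key : ∀ x ∈ R.Φ, ∀ n : ℕ, x + ((n : ℚ) * (g x - f x)) • α ∈ R.Φ := by
    intro x hx n
    induction n with
    | zero => simpa using hx
    | succ n ih =>
      have := hu _ ih
      have hgf : g (x + ((n : ℚ) * (g x - f x)) • α) - f (x + ((n : ℚ) * (g x - f x)) • α)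
          = g x - f x := by
        simp only [map_add, map_smul, smul_eq_mul, R.coroot_self α hα, hf2, ← hg]
        rw [hg, R.coroot_self α hα]; ring
      rw [hgf] at this
      convert this using 1
      push_cast; module
  -- if g x ≠ f x for some root, we get infinitely many roots
  have heq : ∀ x ∈ R.Φ, f x = g x := by
    intro x hx
    by_contra hne
    have hc : g x - f x ≠ 0 := fun h => hne (by linarith [sub_eq_zero.mp h])
    have hinj : Function.Injective (fun n : ℕ => x + ((n : ℚ) * (g x - f x)) • α) := by
      intro a b hab
      simp only [add_right_inj] at hab
      have := smul_left_injective ℚ hα0 hab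
      have : (a : ℚ) = b := by
        exact mul_right_cancel₀ hc this
      exact_mod_cast this
    exact Set.not_infinite.mpr R.finite
      (Set.infinite_of_injective_forall_mem hinj (fun n => key x hx n))
  symm
  apply LinearMap.ext_on R.span_eq_top
  intro x hx
  exact (heq x hx).symm


lemma coroot_σ {α γ : V} (hα : α ∈ R.Φ) (hγ : γ ∈ R.Φ) :
    R.coroot (R.σ α γ) = (R.coroot γ).comp (R.σ α) := by
  symm
  apply R.coroot_unique (R.σ_mem hα hγ)
  · simp [LinearMap.comp_apply, R.σ_invol hα, R.coroot_self γ hγ]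
  · intro β hβ
    have h1 : R.σ α β ∈ R.Φ := R.σ_mem hα hβ
    have h2 : R.σ α β - R.coroot γ (R.σ α β) • γ ∈ R.Φ := R.reflect_mem γ hγ _ h1
    have h3 := R.σ_mem hα h2
    have : R.σ α (R.σ α β - R.coroot γ (R.σ α β) • γ)
        = β - ((R.coroot γ).comp (R.σ α)) β • R.σ α γ := by
      rw [map_sub, map_smul, R.σ_invol hα]; rfl
    rwa [this] at h3

/-- An invariant positive semidefinite form built from the coroots. -/
noncomputable def B (x y : V) : ℚ := ∑ γ ∈ R.finite.toFinset, R.coroot γ x * R.coroot γ y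

lemma B_symm (x y : V) : R.B x y = R.B y x := by
  unfold B; exact Finset.sum_congr rfl fun γ _ => mul_comm _ _

lemma B_add_left (x y z : V) : R.B (x + y) z = R.B x z + R.B y z := by
  unfold B; rw [← Finset.sum_add_distrib]
  exact Finset.sum_congr rfl fun γ _ => by rw [map_add]; ring

lemma B_smul_left (c : ℚ) (x z : V) : R.B (c • x) z = c * R.B x z := by
  unfold B; rw [Finset.mul_sum]
  exact Finset.sum_congr rfl fun γ _ => by rw [map_smul]; simp; ring

lemma B_neg_left (x z : V) : R.B (-x) z = -R.B x z := by
  have := R.B_smul_left (-1) x z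
  simpa using this

lemma B_sub_left (x y z : V) : R.B (x - y) z = R.B x z - R.B y z := by
  rw [sub_eq_add_neg, R.B_add_left, R.B_neg_left, sub_eq_add_neg]

lemma B_sum_left {ι : Type*} (t : Finset ι) (f : ι → V) (z : V) :
    R.B (∑ i ∈ t, f i) z = ∑ i ∈ t, R.B (f i) z := by
  classical
  induction t using Finset.induction with
  | empty => simp [B]
  | insert _ _ hnot ih =>
      rw [Finset.sum_insert hnot, Finset.sum_insert hnot, R.B_add_left, ih]

lemma B_self_nonneg (x : V) : 0 ≤ R.B x x :=
  Finset.sum_nonneg fun γ _ => mul_self_nonneg _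

lemma B_root_self_pos {α : V} (hα : α ∈ R.Φ) : 0 < R.B α α := by
  have hmem : α ∈ R.finite.toFinset := R.finite.mem_toFinset.mpr hα
  have h4 : (4:ℚ) ≤ R.B α α := by
    have h := Finset.single_le_sum (f := fun γ => R.coroot γ α * R.coroot γ α)
      (fun γ _ => mul_self_nonneg _) hmem
    simp only [R.coroot_self α hα] at h
    have : R.B α α = ∑ x ∈ R.finite.toFinset, R.coroot x α * R.coroot x α := rfl
    rw [this]; linarith
  linarith

lemma B_invariant {α : V} (hα : α ∈ R.Φ) (x y : V) :
    R.B (R.σ α x) (R.σ α y) = R.B x y := by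
  unfold B
  rw [← Finset.sum_nbij' (i := fun γ => R.σ α γ) (j := fun γ => R.σ α γ)]
  · intro γ hγ
    exact R.finite.mem_toFinset.mpr (R.σ_mem hα (R.finite.mem_toFinset.mp hγ))
  · intro γ hγ
    exact R.finite.mem_toFinset.mpr (R.σ_mem hα (R.finite.mem_toFinset.mp hγ))
  · intro γ hγ; exact R.σ_invol hα γ
  · intro γ hγ; exact R.σ_invol hα γ
  · intro γ hγ
    rw [R.coroot_σ hα (R.finite.mem_toFinset.mp hγ)]
    simp only [LinearMap.comp_apply]
    rw [R.σ_invol hα, R.σ_invol hα]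

lemma B_coroot_eq {α : V} (hα : α ∈ R.Φ) (x : V) :
    2 * R.B α x = R.coroot α x * R.B α α := by
  have h := R.B_invariant hα α x
  have hσα : R.σ α α = -α := by
    rw [σ_apply, R.coroot_self α hα]; module
  rw [hσα, σ_apply, B_neg_left, B_symm, B_sub_left, B_smul_left] at h
  have hsymm : R.B x α = R.B α x := R.B_symm x α
  rw [hsymm] at h
  linarith


lemma B_smul_right (c : ℚ) (x z : V) : R.B x (c • z) = c * R.B x z := by
  rw [B_symm, B_smul_left, B_symm]

lemma B_sub_right (x y z : V) : R.B x (y - z) = R.B x y - R.B x z := by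
  rw [B_symm, B_sub_left, B_symm, show R.B z x = R.B x z from R.B_symm z x]

lemma B_expand (a b : ℚ) (x y : V) :
    R.B (a • x - b • y) (a • x - b • y)
      = a * a * R.B x x - 2 * (a * b) * R.B x y + b * b * R.B y y := by
  rw [B_sub_left, B_smul_left, B_smul_left, B_sub_right, B_sub_right,
      B_smul_right, B_smul_right, B_smul_right, B_smul_right,
      show R.B y x = R.B x y from R.B_symm y x]
  ring

lemma B_cauchy_schwarz (x y : V) : R.B x y ^ 2 ≤ R.B x x * R.B y y := by
  rcases eq_or_lt_of_le (R.B_self_nonneg y) with hy | hy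
  · have hxy : R.B x y = 0 := by
      by_contra h
      set t : ℚ := (R.B x x + 1)/(2 * R.B x y) with ht
      have key := R.B_self_nonneg ((1:ℚ) • x - t • y)
      rw [B_expand, ← hy] at key
      have h3 : 2 * (1 * t) * R.B x y = R.B x x + 1 := by
        rw [ht]; field_simp
      rw [h3] at key
      linarith
    rw [hxy, ← hy]
    nlinarith [R.B_self_nonneg x]
  · have h := R.B_self_nonneg ((R.B y y) • x - (R.B x y) • y)
    rw [B_expand] at h
    nlinarith [h, hy]

lemma eq_of_coroot_two_two {α β : V} (hα : α ∈ R.Φ) (hβ : β ∈ R.Φ)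
    (h1 : R.coroot α β = 2) (h2 : R.coroot β α = 2) : α = β := by
  set v := β - α with hv
  have hcv1 : R.coroot α v = 0 := by
    rw [hv, map_sub, h1, R.coroot_self α hα]; ring
  have hcv2 : R.coroot β v = 0 := by
    rw [hv, map_sub, R.coroot_self β hβ, h2]; ring
  have key : ∀ n : ℕ, α - ((2 * n : ℚ)) • v ∈ R.Φ := by
    intro n
    induction n with
    | zero => simpa using hα
    | succ n ih =>
        have s1 : α - (2*(n:ℚ)) • v - R.coroot β (α - (2*(n:ℚ)) • v) • β ∈ R.Φ :=
          R.reflect_mem β hβ _ ih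
        have e1 : R.coroot β (α - (2*(n:ℚ)) • v) = 2 := by
          rw [map_sub, map_smul, h2, hcv2]; simp
        rw [e1] at s1
        have s2 := R.reflect_mem α hα _ s1
        have e2 : R.coroot α (α - (2*(n:ℚ)) • v - (2:ℚ) • β) = -2 := by
          rw [map_sub, map_sub, map_smul, map_smul, R.coroot_self α hα, hcv1, h1]
          norm_num
        rw [e2] at s2
        convert s2 using 1
        rw [hv]; push_cast; module
  by_contra hne
  have hvne : v ≠ 0 := fun h => hne (sub_eq_zero.mp h).symm
  have hinj : Function.Injective (fun n : ℕ => α - ((2 * n : ℚ)) • v) := by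
    intro a b hab
    simp only [sub_right_inj] at hab
    have := smul_left_injective ℚ hvne hab
    have h2 : (a : ℚ) = b := by
      have h3 : (2:ℚ) * a = 2 * b := this
      linarith
    exact_mod_cast h2
  exact Set.not_infinite.mpr R.finite
    (Set.infinite_of_injective_forall_mem hinj (fun n => key n))

lemma sub_mem_of_B_pos {α β : V} (hα : α ∈ R.Φ) (hβ : β ∈ R.Φ) (hne : α ≠ β)
    (hB : 0 < R.B α β) : β - α ∈ R.Φ := by
  have hBα := R.B_root_self_pos hα
  have hBβ := R.B_root_self_pos hβ
  have hn : 2 * R.B α β = R.coroot α β * R.B α α := R.B_coroot_eq hα β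
  have hm : 2 * R.B β α = R.coroot β α * R.B β β := R.B_coroot_eq hβ α
  rw [R.B_symm β α] at hm
  obtain ⟨n, hnz⟩ := R.crystallographic α hα β hβ
  obtain ⟨m, hmz⟩ := R.crystallographic β hβ α hα
  have hn1 : 1 ≤ n := by
    by_contra h
    push_neg at h
    have hle : n ≤ 0 := by omega
    have : R.coroot α β ≤ 0 := by rw [hnz]; exact_mod_cast hle
    nlinarith [hn, hBα, hB, this]
  have hm1 : 1 ≤ m := by
    by_contra h
    push_neg at h
    have hle : m ≤ 0 := by omega
    have : R.coroot β α ≤ 0 := by rw [hmz]; exact_mod_cast hle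
    nlinarith [hm, hBβ, hB, this]
  rcases eq_or_lt_of_le hn1 with h1 | h1
  · -- n = 1 : β - α = σ α β
    have : R.coroot α β = 1 := by rw [hnz, ← h1]; norm_num
    have := R.reflect_mem α hα β hβ
    rwa [‹R.coroot α β = 1›, one_smul] at this
  rcases eq_or_lt_of_le hm1 with h2 | h2
  · have : R.coroot β α = 1 := by rw [hmz, ← h2]; norm_num
    have h3 := R.reflect_mem β hβ α hα
    rw [‹R.coroot β α = 1›, one_smul] at h3
    have := R.neg_mem_s14 h3
    rwa [neg_sub] at this
  -- n ≥ 2 and m ≥ 2 : forces n = m = 2 and α = β, contradiction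
  exfalso
  have hn2 : (2:ℚ) ≤ R.coroot α β := by rw [hnz]; exact_mod_cast h1
  have hm2 : (2:ℚ) ≤ R.coroot β α := by rw [hmz]; exact_mod_cast h2
  have hcs := R.B_cauchy_schwarz α β
  have hAB : R.B α α ≤ R.B α β := by nlinarith
  have hBB : R.B β β ≤ R.B α β := by nlinarith
  have hAα : R.B α α = R.B α β := by nlinarith
  have hBβ' : R.B β β = R.B α β := by nlinarith
  have hcn : R.coroot α β = 2 := by nlinarith
  have hcm : R.coroot β α = 2 := by nlinarith
  exact hne (R.eq_of_coroot_two_two hα hβ hcn hcm)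


end RootSystemData


namespace RootSystemData
variable (R : RootSystemData V)

lemma coeffs_eq {Δ : Finset V} (hΔ : R.IsBase Δ) (f g : V → ℚ)
    (h : ∑ α ∈ Δ, f α • α = ∑ α ∈ Δ, g α • α) : ∀ α ∈ Δ, f α = g α := by
  have li := hΔ.2.1
  rw [Fintype.linearIndependent_iff] at li
  have hz : ∑ i : {x : V // x ∈ Δ}, (f i - g i) • (i : V) = 0 := by
    have : ∑ i : {x : V // x ∈ Δ}, (f i - g i) • (i : V)
        = ∑ α ∈ Δ, (f α - g α) • α := Finset.sum_coe_sort Δ (fun x => (f x - g x) • x)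
    rw [this]
    simp only [sub_smul, Finset.sum_sub_distrib, h, sub_self]
  intro α hα
  have := li (fun i => f i - g i) hz ⟨α, hα⟩
  simpa [sub_eq_zero] using this

lemma chain [DecidableEq V] {Δ : Finset V} (hΔ : R.IsBase Δ) :
    ∀ h : ℕ, ∀ β : V, ∀ c : V → ℕ, β ∈ R.Φ → β = ∑ α ∈ Δ, (c α : ℚ) • α →
      (∑ α ∈ Δ, c α) = h →
      ∃ (n : ℕ) (a : ℕ → V), 0 < n ∧ (∀ j, j < n → a j ∈ Δ) ∧
        (∀ i, 0 < i → i ≤ n → ∑ j ∈ Finset.range i, a j ∈ R.Φ) ∧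
        ∑ j ∈ Finset.range n, a j = β := by
  intro h
  induction h using Nat.strong_induction_on with
  | _ h ih =>
    intro β c hβΦ hβc hsum
    by_cases hβΔ : β ∈ Δ
    · refine ⟨1, fun _ => β, one_pos, fun j _ => hβΔ, ?_, by simp⟩
      intro i hi1 hi2
      interval_cases i
      simpa using hβΦ
    · -- find a simple root α with c α > 0 and B α β > 0
      have hBβ : 0 < R.B β β := R.B_root_self_pos hβΦ
      have hBsum : R.B β β = ∑ α ∈ Δ, (c α : ℚ) * R.B α β := by
        have e := R.B_sum_left Δ (fun α => ((c α : ℚ)) • α) β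
        rw [← hβc] at e
        rw [e]
        exact Finset.sum_congr rfl fun α _ => R.B_smul_left _ _ _
      have hex : ∃ α ∈ Δ, 0 < c α ∧ 0 < R.B α β := by
        by_contra hcon
        push_neg at hcon
        have : R.B β β ≤ 0 := by
          rw [hBsum]
          apply Finset.sum_nonpos
          intro α hα
          rcases Nat.eq_zero_or_pos (c α) with h0 | h0
          · simp [h0]
          · have := hcon α hα h0
            have hc0 : (0:ℚ) ≤ (c α : ℚ) := by positivity
            exact mul_nonpos_of_nonneg_of_nonpos hc0 this
        linarith
      obtain ⟨α, hαΔ, hcα, hBαβ⟩ := hex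
      have hαΦ : α ∈ R.Φ := hΔ.1 hαΔ
      have hαβ : α ≠ β := fun h => hβΔ (h ▸ hαΔ)
      have hsub : β - α ∈ R.Φ := R.sub_mem_of_B_pos hαΦ hβΦ hαβ hBαβ
      -- new coefficients
      set c' : V → ℕ := fun x => if x = α then c x - 1 else c x with hc'
      have hsplit : ∀ (f : V → ℚ), ∑ x ∈ Δ, f x • x = f α • α + ∑ x ∈ Δ.erase α, f x • x :=
        fun f => (Finset.add_sum_erase Δ (fun x => f x • x) hαΔ).symm
      have hβ'c : β - α = ∑ x ∈ Δ, (c' x : ℚ) • x := by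
        rw [hsplit (fun x => ((c' x : ℚ))), hsplit (fun x => ((c x : ℚ))) ] at *
        have h1 : ∑ x ∈ Δ.erase α, (c' x : ℚ) • x = ∑ x ∈ Δ.erase α, (c x : ℚ) • x := by
          apply Finset.sum_congr rfl
          intro x hx
          have : x ≠ α := Finset.ne_of_mem_erase hx
          simp [hc', this]
        rw [h1]
        have h2 : ((c' α : ℚ)) = (c α : ℚ) - 1 := by
          simp only [hc', if_pos rfl]
          have : (1:ℕ) ≤ c α := hcα
          push_cast [Nat.cast_sub this]
          ring
        rw [h2, hβc]
        module
      have hsum' : ∑ x ∈ Δ, c' x = h - 1 := by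
        rw [← hsum]
        rw [← Finset.add_sum_erase Δ c' hαΔ, ← Finset.add_sum_erase Δ c hαΔ]
        have h1 : ∑ x ∈ Δ.erase α, c' x = ∑ x ∈ Δ.erase α, c x := by
          apply Finset.sum_congr rfl
          intro x hx
          simp [hc', Finset.ne_of_mem_erase hx]
        rw [h1]
        simp only [hc', if_pos rfl]
        omega
      have hh1 : 1 ≤ h := by
        rw [← hsum]
        calc 1 ≤ c α := hcα
        _ ≤ ∑ x ∈ Δ, c x := Finset.single_le_sum (fun _ _ => Nat.zero_le _) hαΔ
      obtain ⟨n, a, hn0, haΔ, hamem, hafin⟩ :=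
        ih (h - 1) (by omega) (β - α) c' hsub hβ'c hsum'
      refine ⟨n + 1, fun j => if j < n then a j else α, by omega, ?_, ?_, ?_⟩
      · intro j hj
        by_cases hjn : j < n
        · simp [hjn, haΔ j hjn]
        · simp [hjn, hαΔ]
      · intro i hi1 hi2
        rcases Nat.lt_or_ge i (n+1) with hi | hi
        · have hin : i ≤ n := by omega
          have : ∑ j ∈ Finset.range i, (if j < n then a j else α) = ∑ j ∈ Finset.range i, a j := by
            apply Finset.sum_congr rfl
            intro j hj
            have : j < n := by
              have := Finset.mem_range.mp hj; omega
            simp [this]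
          rw [this]
          exact hamem i hi1 hin
        · have : i = n + 1 := by omega
          subst this
          rw [Finset.sum_range_succ]
          have h1 : ∑ j ∈ Finset.range n, (if j < n then a j else α) = β - α := by
            rw [← hafin]
            apply Finset.sum_congr rfl
            intro j hj
            simp [Finset.mem_range.mp hj]
          have h2 : ¬ (n < n) := lt_irrefl n
          rw [h1, if_neg h2]
          simpa using hβΦ
      · rw [Finset.sum_range_succ]
        have h1 : ∑ j ∈ Finset.range n, (if j < n then a j else α) = β - α := by
          rw [← hafin]
          apply Finset.sum_congr rfl
          intro j hj
          simp [Finset.mem_range.mp hj]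
        rw [h1, if_neg (lt_irrefl n)]
        module

end RootSystemData


private lemma hom_finset_sum {M : Type*} [CommGroup M] {V : Type*} [AddCommGroup V]
    (s : V → M) (hs : ∀ x y : V, s (x + y) = s x * s y)
    {ι : Type*} (t : Finset ι) (f : ι → V) :
    s (∑ i ∈ t, f i) = ∏ i ∈ t, s (f i) := by
  classical
  have hs0 : s 0 = 1 := by
    have h := hs 0 0
    rw [add_zero] at h
    exact left_eq_mul.mp h
  induction t using Finset.induction with
  | empty => simpa using hs0
  | insert _ _ h ih => rw [Finset.sum_insert h, Finset.prod_insert h, hs, ih]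

private lemma hom_nat_smul {M : Type*} [CommGroup M] {V : Type*} [AddCommGroup V] [Module ℚ V]
    (s : V → M) (hs : ∀ x y : V, s (x + y) = s x * s y) (m : ℕ) (x : V) :
    s ((m : ℚ) • x) = s x ^ m := by
  have hs0 : s 0 = 1 := by
    have h := hs 0 0
    rw [add_zero] at h
    exact left_eq_mul.mp h
  induction m with
  | zero => simpa using hs0
  | succ m ih =>
      have : ((m + 1 : ℕ) : ℚ) • x = (m : ℚ) • x + x := by push_cast; module
      rw [this, hs, ih, pow_succ]

private lemma nat_ivt (q : ℕ → ℕ) (h0 : q 0 = 0) (hstep : ∀ i, q (i+1) ≤ q i + 1) :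
    ∀ n t, t ≤ q n → ∃ i, i ≤ n ∧ q i = t := by
  intro n
  induction n with
  | zero => intro t ht; exact ⟨0, le_refl 0, by omega⟩
  | succ n ih =>
    intro t ht
    by_cases h : t ≤ q n
    · obtain ⟨i, h1, h2⟩ := ih t h
      exact ⟨i, by omega, h2⟩
    · exact ⟨n+1, le_refl _, by have := hstep n; omega⟩


set_option maxHeartbeats 1600000 in
/-- Key computation of the surjectivity proof: if $s$ has order $d$, takes value
$\zeta_d^k$ on $\mathcal{O}$ and $1$ on $\Delta_a\setminus\mathcal{O}$, and
$\{\alpha\in\Phi : \alpha(s)=1\}$ is exactly the set of roots that are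
$\mathbb{Z}$-combinations of $\Delta_a\setminus\mathcal{O}$, then $d$ divides
$\underline{d}=\sum_{\alpha\in\mathcal{O}}d(\alpha)$, $k$ is coprime to $d$, and
$d=\underline{d}$. -/
theorem stmt_14 {V : Type*} [AddCommGroup V] [Module ℚ V] [DecidableEq V]
    (R : RootSystemData V) (Δ : Finset V) (hΔ : R.IsBase Δ)
    (θ : V) (hθ : R.IsHighest Δ θ)
    (α₀ : V) (hα₀ : α₀ = -θ) (hα₀Δ : α₀ ∉ Δ)
    (dm : V → ℕ) (hd0 : dm α₀ = 1) (hdθ : θ = ∑ α ∈ Δ, (dm α : ℚ) • α)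
    (O : Finset V) (hOsub : O ⊆ insert α₀ Δ) (hOne : O.Nonempty)
    (dbar : ℕ) (hdbar : dbar = ∑ α ∈ O, dm α)
    (s : V → ℂˣ) (hs : ∀ x y : V, s (x + y) = s x * s y)
    (d : ℕ) (hd1 : 0 < d)
    (horder : ∀ β ∈ R.Φ, s β ^ d = 1)
    (hmin : ∀ n : ℕ, 0 < n → (∀ β ∈ R.Φ, s β ^ n = 1) → d ≤ n)
    (ζ : ℂˣ) (hζ : IsPrimitiveRoot ζ d)
    (k : ℕ) (hk1 : 1 ≤ k) (hk2 : k ≤ d - 1)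
    (hs1 : ∀ α ∈ insert α₀ Δ \ O, s α = 1)
    (hsk : ∀ α ∈ O, s α = ζ ^ k)
    (hspan : ∀ β ∈ R.Φ,
      (s β = 1 ↔ ∃ c : V → ℤ, β = ∑ x ∈ insert α₀ Δ \ O, (c x : ℚ) • x)) :
    d ∣ dbar ∧ Nat.Coprime k d ∧ d = dbar := by
  classical
  -- basic properties of s
  have hs0 : s 0 = 1 := by
    have h := hs 0 0
    rw [add_zero] at h
    exact left_eq_mul.mp h
  have hsneg : ∀ x : V, s (-x) = (s x)⁻¹ := by
    intro x
    have h := hs x (-x)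
    rw [add_neg_cancel, hs0] at h
    exact eq_inv_of_mul_eq_one_right h.symm
  -- every simple root has positive mark in θ
  have hdm1 : ∀ α ∈ Δ, 1 ≤ dm α := by
    intro α hα
    have hind : ∑ x ∈ Δ, ((if x = α then (1:ℕ) else 0 : ℕ) : ℚ) • x = α := by
      rw [Finset.sum_eq_single α]
      · simp
      · intro b _ hb; simp [hb]
      · intro h; exact absurd hα h
    have hpos : R.IsPos Δ α := ⟨hΔ.1 hα, ⟨fun x => if x = α then 1 else 0, hind.symm⟩⟩
    obtain ⟨e, he⟩ := hθ.2 α hpos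
    have hθ2 : θ = ∑ x ∈ Δ, ((e x : ℚ) + (if x = α then (1:ℕ) else 0 : ℕ)) • x := by
      have : θ = (θ - α) + α := by module
      rw [this, he]
      conv_lhs => rw [← hind]
      rw [← Finset.sum_add_distrib]
      apply Finset.sum_congr rfl
      intro x _
      rw [add_smul]
    have := R.coeffs_eq hΔ (fun x => (dm x : ℚ))
      (fun x => (e x : ℚ) + ((if x = α then (1:ℕ) else 0 : ℕ) : ℚ)) (by rw [← hdθ, ← hθ2]) α hα
    simp only [if_pos rfl] at this
    have : (dm α : ℚ) = (e α : ℚ) + 1 := by exact_mod_cast this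
    have : dm α = e α + 1 := by exact_mod_cast this
    omega
  -- chain of partial sums up to θ
  obtain ⟨n, a, hn0, haΔ, hamem, hafin⟩ :=
    R.chain hΔ (∑ α ∈ Δ, dm α) θ dm hθ.1.1 hdθ rfl
  set cnt : ℕ → V → ℕ := fun i α => ((Finset.range i).filter (fun j => a j = α)).card with hcnt
  set q : ℕ → ℕ := fun i => ((Finset.range i).filter (fun j => a j ∈ O)).card with hqdef
  set ps : ℕ → V := fun i => ∑ j ∈ Finset.range i, a j with hps
  -- partial sums in terms of counts
  have hpsc : ∀ i, i ≤ n → ps i = ∑ α ∈ Δ, ((cnt i α : ℚ)) • α := by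
    intro i hi
    have hmaps : ∀ j ∈ Finset.range i, a j ∈ Δ := fun j hj =>
      haΔ j (lt_of_lt_of_le (Finset.mem_range.mp hj) hi)
    have := Finset.sum_fiberwise_of_maps_to hmaps (fun j => a j)
    simp only [hps]
    rw [← this]
    apply Finset.sum_congr rfl
    intro α _
    have : ∑ j ∈ (Finset.range i).filter (fun j => a j = α), a j
        = ∑ j ∈ (Finset.range i).filter (fun j => a j = α), α := by
      apply Finset.sum_congr rfl
      intro j hj
      exact (Finset.mem_filter.mp hj).2
    rw [this, Finset.sum_const]
    simp only [hcnt]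
    rw [Nat.cast_smul_eq_nsmul]
  have hqc : ∀ i, i ≤ n → q i = ∑ α ∈ Δ.filter (· ∈ O), cnt i α := by
    intro i hi
    have hmaps : ∀ j ∈ Finset.range i, a j ∈ Δ := fun j hj =>
      haΔ j (lt_of_lt_of_le (Finset.mem_range.mp hj) hi)
    have hfib := Finset.sum_fiberwise_of_maps_to hmaps
      (fun j => if a j ∈ O then (1:ℕ) else 0)
    have h1 : q i = ∑ j ∈ Finset.range i, (if a j ∈ O then (1:ℕ) else 0) := by
      simp only [hqdef]
      rw [Finset.card_filter]
    rw [h1, ← hfib, Finset.sum_filter]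
    apply Finset.sum_congr rfl
    intro α _
    by_cases hαO : α ∈ O
    · have : ∑ j ∈ (Finset.range i).filter (fun j => a j = α),
          (if a j ∈ O then (1:ℕ) else 0) = ∑ j ∈ (Finset.range i).filter (fun j => a j = α), 1 := by
        apply Finset.sum_congr rfl
        intro j hj
        rw [(Finset.mem_filter.mp hj).2, if_pos hαO]
      rw [this, if_pos hαO, Finset.sum_const, smul_eq_mul, mul_one]
    · have : ∑ j ∈ (Finset.range i).filter (fun j => a j = α),
          (if a j ∈ O then (1:ℕ) else 0) = 0 := by
        apply Finset.sum_eq_zero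
        intro j hj
        rw [(Finset.mem_filter.mp hj).2, if_neg hαO]
      rw [this, if_neg hαO]
  have hTeq : Δ.filter (· ∈ O) = O.erase α₀ := by
    ext x
    simp only [Finset.mem_filter, Finset.mem_erase]
    constructor
    · rintro ⟨hxΔ, hxO⟩
      exact ⟨fun h => hα₀Δ (h ▸ hxΔ), hxO⟩
    · rintro ⟨hx0, hxO⟩
      refine ⟨?_, hxO⟩
      have := hOsub hxO
      rcases Finset.mem_insert.mp this with h | h
      · exact absurd h hx0
      · exact h
  -- counts for the full chain equal the marks
  have hcntn : ∀ α ∈ Δ, cnt n α = dm α := by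
    intro α hα
    have h1 : θ = ∑ α ∈ Δ, ((cnt n α : ℚ)) • α := by rw [← hafin, ← hpsc n (le_refl n)]
    have h5 : (cnt n α : ℚ) = (dm α : ℚ) := R.coeffs_eq hΔ (fun x => (cnt n x : ℚ))
      (fun x => (dm x : ℚ)) (by rw [← h1, ← hdθ]) α hα
    exact_mod_cast h5
  have hqn : q n = ∑ α ∈ O.erase α₀, dm α := by
    rw [hqc n (le_refl n), hTeq]
    apply Finset.sum_congr rfl
    intro α hα
    have hαΔ : α ∈ Δ := by
      have h := hTeq ▸ hα
      exact (Finset.mem_filter.mp h).1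
    exact hcntn α hαΔ
  have hdbarq : dbar = (if α₀ ∈ O then 1 else 0) + q n := by
    rw [hdbar, hqn]
    by_cases h0 : α₀ ∈ O
    · rw [if_pos h0, ← Finset.add_sum_erase O dm h0, hd0]
    · rw [if_neg h0, Finset.erase_eq_of_notMem h0, zero_add]
  -- value of s on partial sums
  have hsps : ∀ i, i ≤ n → s (ps i) = ζ ^ (k * q i) := by
    intro i hi
    simp only [hps]
    rw [hom_finset_sum s hs]
    have : ∀ j ∈ Finset.range i, s (a j) = (if a j ∈ O then ζ ^ k else 1) := by
      intro j hj
      have hjΔ : a j ∈ Δ := haΔ j (lt_of_lt_of_le (Finset.mem_range.mp hj) hi)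
      by_cases hO : a j ∈ O
      · rw [if_pos hO]; exact hsk _ hO
      · rw [if_neg hO]
        apply hs1
        exact Finset.mem_sdiff.mpr ⟨Finset.mem_insert_of_mem hjΔ, hO⟩
    rw [Finset.prod_congr rfl this, ← Finset.prod_filter, Finset.prod_const, pow_mul]
  have hsθ : s θ = ζ ^ (k * q n) := by
    have h := hsps n (le_refl n)
    have h2 : ps n = θ := by simp only [hps]; exact hafin
    rwa [h2] at h
  -- ζ ^ (k * dbar) = 1
  have hζdbar : ζ ^ (k * dbar) = 1 := by
    have hsum0 : s α₀ * s θ = 1 := by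
      rw [← hs, hα₀, neg_add_cancel, hs0]
    by_cases h0 : α₀ ∈ O
    · have : s α₀ = ζ ^ k := hsk _ h0
      rw [this, hsθ, ← pow_add] at hsum0
      rw [hdbarq, if_pos h0]
      rw [← hsum0]
      ring_nf
    · have : s α₀ = 1 := by
        apply hs1
        exact Finset.mem_sdiff.mpr ⟨Finset.mem_insert_self _ _, h0⟩
      rw [this, hsθ, one_mul] at hsum0
      rw [hdbarq, if_neg h0, zero_add]
      exact hsum0
  have hdvdk : d ∣ k * dbar := hζ.pow_eq_one_iff_dvd _ |>.mp hζdbar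
  -- coprimality
  set g := Nat.gcd k d with hg
  have hgpos : 0 < g := Nat.gcd_pos_of_pos_right k hd1
  have hgk : g ∣ k := Nat.gcd_dvd_left k d
  have hgd : g ∣ d := Nat.gcd_dvd_right k d
  have hζkg : (ζ ^ k) ^ (d / g) = 1 := by
    rw [← pow_mul]
    have : k * (d / g) = (k / g) * d := by
      rcases hgk with ⟨k', hk'⟩
      rcases hgd with ⟨d', hd'⟩
      rw [hk', hd']
      rw [Nat.mul_div_cancel_left d' hgpos, Nat.mul_div_cancel_left k' hgpos]
      ring
    rw [this, pow_mul', hζ.pow_eq_one, one_pow]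
  have hallpow : ∀ c : V → ℕ, (s (∑ α ∈ Δ, ((c α : ℚ)) • α)) ^ (d / g) = 1 := by
    intro c
    rw [hom_finset_sum s hs, ← Finset.prod_pow]
    apply Finset.prod_eq_one
    intro α hα
    rw [hom_nat_smul s hs, ← pow_mul, mul_comm (c α) (d / g), pow_mul]
    by_cases hO : α ∈ O
    · rw [hsk _ hO, hζkg, one_pow]
    · rw [hs1 _ (Finset.mem_sdiff.mpr ⟨Finset.mem_insert_of_mem hα, hO⟩), one_pow, one_pow]
  have hdgall : ∀ β ∈ R.Φ, s β ^ (d / g) = 1 := by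
    intro β hβ
    rcases hΔ.2.2 β hβ with ⟨c, hc⟩ | ⟨c, hc⟩
    · rw [hc]; exact hallpow c
    · rw [hc, hsneg, inv_pow, hallpow c, inv_one]
  have hdg : d / g = d := by
    have h1 : d ≤ d / g := hmin (d / g) (Nat.div_pos (Nat.le_of_dvd hd1 hgd) hgpos) hdgall
    have h2 : d / g ≤ d := Nat.div_le_self d g
    omega
  have hcop : Nat.Coprime k d := by
    have := Nat.div_mul_cancel hgd
    rw [hdg] at this
    have hg1 : g = 1 := Nat.eq_of_mul_eq_mul_left hd1 (by rw [mul_one]; exact this)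
    exact hg1
  -- d divides dbar
  have hdvd : d ∣ dbar := (Nat.Coprime.dvd_of_dvd_mul_left (hcop.symm) hdvdk)
  refine ⟨hdvd, hcop, ?_⟩
  -- now show d = dbar, by contradiction
  by_contra hne
  have hdm1' : ∀ α ∈ O, 1 ≤ dm α := by
    intro α hα
    rcases Finset.mem_insert.mp (hOsub hα) with h | h
    · rw [h, hd0]
    · exact hdm1 α h
  have hdbarpos : 0 < dbar := by
    obtain ⟨α, hα⟩ := hOne
    have h1 : 1 ≤ dm α := hdm1' α hα
    have : dm α ≤ ∑ x ∈ O, dm x := Finset.single_le_sum (fun _ _ => Nat.zero_le _) hα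
    omega
  have hlt : d < dbar := lt_of_le_of_ne (Nat.le_of_dvd hdbarpos hdvd) hne
  -- d ≤ q n
  have hdqn : d ≤ q n := by
    by_cases h0 : α₀ ∈ O
    · rw [hdbarq, if_pos h0] at hlt hdvd
      obtain ⟨m, hm⟩ := hdvd
      have hm2 : 2 ≤ m := by
        rcases Nat.lt_or_ge m 2 with h | h
        · interval_cases m <;> omega
        · exact h
      nlinarith [hm, hm2, hd1]
    · rw [hdbarq, if_neg h0, zero_add] at hlt
      omega
  -- find the intermediate root
  have hq0 : q 0 = 0 := by simp [hqdef]
  have hqstep : ∀ i, q (i+1) ≤ q i + 1 := by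
    intro i
    simp only [hqdef]
    have hsub : (Finset.range (i+1)).filter (fun j => a j ∈ O)
        ⊆ insert i ((Finset.range i).filter (fun j => a j ∈ O)) := by
      intro j hj
      obtain ⟨hj1, hj2⟩ := Finset.mem_filter.mp hj
      rcases Nat.lt_or_ge j i with h | h
      · exact Finset.mem_insert_of_mem (Finset.mem_filter.mpr ⟨Finset.mem_range.mpr h, hj2⟩)
      · have : j = i := by have := Finset.mem_range.mp hj1; omega
        exact this ▸ Finset.mem_insert_self _ _
    calc ((Finset.range (i+1)).filter (fun j => a j ∈ O)).card
        ≤ (insert i ((Finset.range i).filter (fun j => a j ∈ O))).card := Finset.card_le_card hsub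
      _ ≤ ((Finset.range i).filter (fun j => a j ∈ O)).card + 1 := Finset.card_insert_le _ _
  obtain ⟨i, hin, hqi⟩ := nat_ivt q hq0 hqstep n d hdqn
  have hipos : 0 < i := by
    rcases Nat.eq_zero_or_pos i with h | h
    · rw [h, hq0] at hqi; omega
    · exact h
  have hγΦ : ps i ∈ R.Φ := hamem i hipos hin
  have hsγ : s (ps i) = 1 := by
    rw [hsps i hin, hqi, mul_comm, pow_mul, hζ.pow_eq_one, one_pow]
  obtain ⟨cz, hcz⟩ := (hspan _ hγΦ).mp hsγ
  have hγc : ps i = ∑ α ∈ Δ, ((cnt i α : ℚ)) • α := hpsc i hin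
  have hqi' : ∑ α ∈ O.erase α₀, (cnt i α) = d := by
    rw [← hqi, hqc i hin, hTeq]
  by_cases h0 : α₀ ∈ O
  · -- Case 1 : α₀ ∈ O, the span is over Δ \ O
    have hS : insert α₀ Δ \ O = Δ \ O := by
      ext x
      simp only [Finset.mem_sdiff, Finset.mem_insert]
      constructor
      · rintro ⟨h1 | h1, h2⟩
        · exact absurd (h1 ▸ h0) h2
        · exact ⟨h1, h2⟩
      · rintro ⟨h1, h2⟩
        exact ⟨Or.inr h1, h2⟩
    rw [hS] at hcz
    have hγΔ2 : ps i = ∑ x ∈ Δ, (if x ∈ O then (0:ℚ) else (cz x : ℚ)) • x := by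
      rw [hcz, Finset.sdiff_eq_filter]
      rw [Finset.sum_filter]
      apply Finset.sum_congr rfl
      intro x _
      by_cases hxO : x ∈ O <;> simp [hxO]
    have hco := R.coeffs_eq hΔ (fun x => ((cnt i x : ℚ)))
      (fun x => if x ∈ O then (0:ℚ) else (cz x : ℚ)) (by rw [← hγc, ← hγΔ2])
    have : ∀ α ∈ O.erase α₀, cnt i α = 0 := by
      intro α hα
      have hαO : α ∈ O := Finset.mem_of_mem_erase hα
      have hαΔ : α ∈ Δ := by
        rcases Finset.mem_insert.mp (hOsub hαO) with h | h
        · exact absurd h (Finset.ne_of_mem_erase hα)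
        · exact h
      have h7 : (cnt i α : ℚ) = (if α ∈ O then (0:ℚ) else (cz α : ℚ)) := hco α hαΔ
      rw [if_pos hαO] at h7
      exact_mod_cast h7
    rw [Finset.sum_eq_zero this] at hqi'
    omega
  · -- Case 2 : α₀ ∉ O
    have hS : insert α₀ Δ \ O = insert α₀ (Δ \ O) := by
      ext x
      simp only [Finset.mem_sdiff, Finset.mem_insert]
      constructor
      · rintro ⟨h1 | h1, h2⟩
        · exact Or.inl h1
        · exact Or.inr ⟨h1, h2⟩
      · rintro (h1 | ⟨h1, h2⟩)
        · exact ⟨Or.inl h1, h1 ▸ h0⟩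
        · exact ⟨Or.inr h1, h2⟩
    have hα₀nd : α₀ ∉ Δ \ O := fun h => hα₀Δ (Finset.mem_sdiff.mp h).1
    rw [hS, Finset.sum_insert hα₀nd] at hcz
    have hOΔ : O ⊆ Δ := by
      intro x hx
      rcases Finset.mem_insert.mp (hOsub hx) with h | h
      · exact absurd (h ▸ hx) h0
      · exact h
    -- rewrite the α₀ part over Δ
    have hα₀key : ∀ tq : ℚ, tq • α₀ = ∑ x ∈ Δ, (-tq * (dm x : ℚ)) • x := by
      intro tq
      rw [hα₀, hdθ, smul_neg, Finset.smul_sum, ← Finset.sum_neg_distrib]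
      apply Finset.sum_congr rfl
      intro x _
      rw [smul_smul]
      module
    have hα₀sum : (cz α₀ : ℚ) • α₀ = ∑ x ∈ Δ, (-(cz α₀ : ℚ) * (dm x : ℚ)) • x :=
      hα₀key (cz α₀ : ℚ)
    have hrest : ∑ x ∈ Δ \ O, ((cz x : ℚ)) • x
        = ∑ x ∈ Δ, (if x ∈ O then (0:ℚ) else (cz x : ℚ)) • x := by
      rw [Finset.sdiff_eq_filter, Finset.sum_filter]
      apply Finset.sum_congr rfl
      intro x _
      by_cases hxO : x ∈ O <;> simp [hxO]
    have hγΔ2 : ps i = ∑ x ∈ Δ,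
        ((-(cz α₀ : ℚ) * (dm x : ℚ)) + (if x ∈ O then (0:ℚ) else (cz x : ℚ))) • x := by
      rw [hcz, hα₀sum, hrest, ← Finset.sum_add_distrib]
      apply Finset.sum_congr rfl
      intro x _
      rw [add_smul]
    have hco := R.coeffs_eq hΔ (fun x => ((cnt i x : ℚ)))
      (fun x => (-(cz α₀ : ℚ) * (dm x : ℚ)) + (if x ∈ O then (0:ℚ) else (cz x : ℚ)))
      (by rw [← hγc, ← hγΔ2])
    have hOcnt : ∀ α ∈ O, (cnt i α : ℚ) = -(cz α₀ : ℚ) * (dm α : ℚ) := by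
      intro α hα
      have h8 : (cnt i α : ℚ)
          = (-(cz α₀ : ℚ) * (dm α : ℚ)) + (if α ∈ O then (0:ℚ) else (cz α : ℚ)) := hco α (hOΔ hα)
      rw [if_pos hα, add_zero] at h8
      exact h8
    have hsum : (d : ℚ) = -(cz α₀ : ℚ) * (dbar : ℚ) := by
      have h1 : ((∑ α ∈ O, cnt i α : ℕ) : ℚ) = ∑ α ∈ O, ((cnt i α : ℚ)) := by push_cast; rfl
      have h2 : ∑ α ∈ O, ((cnt i α : ℚ)) = ∑ α ∈ O, (-(cz α₀ : ℚ) * (dm α : ℚ)) :=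
        Finset.sum_congr rfl hOcnt
      have h3 : ∑ α ∈ O, (-(cz α₀ : ℚ) * (dm α : ℚ)) = -(cz α₀ : ℚ) * (dbar : ℚ) := by
        rw [← Finset.mul_sum, hdbar]
        push_cast
        ring
      have h4 : ∑ α ∈ O, cnt i α = d := by
        rw [← hqi', Finset.erase_eq_of_notMem h0]
      rw [← h4, h1, h2, h3]
    -- integrality contradiction
    have hz : (d : ℤ) = -(cz α₀) * (dbar : ℤ) := by exact_mod_cast hsum
    have hd1z : (1 : ℤ) ≤ d := by exact_mod_cast hd1
    have hltz : (d : ℤ) < dbar := by exact_mod_cast hlt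
    rcases lt_or_ge (-(cz α₀)) 1 with h | h
    · have : -(cz α₀) ≤ 0 := by omega
      nlinarith [hz, hd1z, this, Int.ofNat_nonneg dbar]
    · nlinarith [hz, hltz, h]
end

section
/- Let Γ be a group, Γ₁ ≤ Γ of finite index, W₁ a Γ₁-group, and W = I_{Γ₁}^Γ(W₁) the induced Γ-group. Then the map β ↦ (τ ↦ β(τ)(e)) induces a bijection (Shapiro isomorphism) H¹(Γ, I_{Γ₁}^Γ(W₁)) → H¹(Γ₁, W₁) on nonabelian first cohomology sets. -/
/-- The induced `Γ`-group `W = I_{Γ₁}^Γ(W₁)`: functions `v : Γ → W₁` with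
`v (γ₁ * γ) = γ₁ • v γ`. -/
def indCarrier {Γ : Type*} [Group Γ] (Γ₁ : Subgroup Γ) (W₁ : Type*) [Group W₁]
    [MulDistribMulAction Γ₁ W₁] : Set (Γ → W₁) :=
  {v | ∀ (g₁ : Γ₁) (g : Γ), v ((g₁ : Γ) * g) = g₁ • v g}

/-- The `Γ`-action on the induced group, by right translation. -/
def actInd {Γ W₁ : Type*} [Group Γ] (σ : Γ) (v : Γ → W₁) : Γ → W₁ := fun γ => v (γ * σ)

/-- A (nonabelian) `1`-cocycle of `Γ` valued in the induced group `W`. -/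
def IsCocycleInd {Γ : Type*} [Group Γ] (Γ₁ : Subgroup Γ) (W₁ : Type*) [Group W₁]
    [MulDistribMulAction Γ₁ W₁] (c : Γ → Γ → W₁) : Prop :=
  (∀ σ : Γ, c σ ∈ indCarrier Γ₁ W₁) ∧ ∀ σ τ : Γ, c (σ * τ) = c σ * actInd σ (c τ)

/-- Two cocycles valued in the induced group are cohomologous. -/
def CohomologousInd {Γ : Type*} [Group Γ] (Γ₁ : Subgroup Γ) (W₁ : Type*) [Group W₁]
    [MulDistribMulAction Γ₁ W₁] (c c' : Γ → Γ → W₁) : Prop :=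
  ∃ m ∈ indCarrier Γ₁ W₁, ∀ σ : Γ, c' σ = m⁻¹ * c σ * actInd σ m

/-- A (nonabelian) `1`-cocycle of `Γ₁` valued in `W₁`. -/
def IsCocycleOne {Γ : Type*} [Group Γ] (Γ₁ : Subgroup Γ) {W₁ : Type*} [Group W₁]
    [MulDistribMulAction Γ₁ W₁] (c : Γ₁ → W₁) : Prop :=
  ∀ σ τ : Γ₁, c (σ * τ) = c σ * σ • c τ

/-- Two cocycles of `Γ₁` valued in `W₁` are cohomologous. -/
def CohomologousOne {Γ : Type*} [Group Γ] {Γ₁ : Subgroup Γ} {W₁ : Type*} [Group W₁]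
    [MulDistribMulAction Γ₁ W₁] (c c' : Γ₁ → W₁) : Prop :=
  ∃ m : W₁, ∀ σ : Γ₁, c' σ = m⁻¹ * c σ * σ • m

/-- The Shapiro map: evaluate a `W`-valued cocycle at the identity of `Γ`. -/
def shapiro {Γ W₁ : Type*} [Group Γ] (Γ₁ : Subgroup Γ) (c : Γ → Γ → W₁) : Γ₁ → W₁ :=
  fun τ => c ↑τ 1

/-!
A cocycle `c` of `Γ` valued in the induced group is determined by `a γ := c γ 1`, through
`c σ γ = (a γ)⁻¹ * a (γ * σ)`, and `a` is twisted-equivariant for the cocycle `c₁ = shapiro c`: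
`a (g₁ * γ) = c₁ g₁ * g₁ • a γ`. Conversely every twisted-equivariant `a` defines such a cocycle,
and for cohomologous `c₁, c₁'` the quotients `a⁻¹ * m₀ * a'` give the element of the induced
group realising the cohomology upstairs. A twisted-equivariant `a` exists for every cocycle `c₁`:
compose `c₁` with a `Γ₁`-equivariant retraction `Γ → Γ₁`, given by a right transversal of `Γ₁`.
-/

section

variable {Γ W₁ : Type*} [Group Γ] [Group W₁] {Γ₁ : Subgroup Γ} [MulDistribMulAction Γ₁ W₁]

def IsTwistedEquivariant (c₁ : Γ₁ → W₁) (a : Γ → W₁) : Prop :=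
  ∀ (g₁ : Γ₁) (γ : Γ), a (g₁ * γ) = c₁ g₁ * g₁ • a γ

def cocycleOf (a : Γ → W₁) : Γ → Γ → W₁ := fun σ γ => (a γ)⁻¹ * a (γ * σ)

theorem exists_equivariant_retraction (Γ₁ : Subgroup Γ) :
    ∃ r : Γ → Γ₁, ∀ (g₁ : Γ₁) (γ : Γ), r (g₁ * γ) = g₁ * r γ := by
  obtain ⟨T, hT, -⟩ := Γ₁.exists_isComplement_right 1
  exact ⟨fun γ => (hT.equiv γ).1, fun g₁ γ => congrArg Prod.fst (hT.equiv_mul_left g₁ γ)⟩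

theorem exists_isTwistedEquivariant {c₁ : Γ₁ → W₁} (hc₁ : IsCocycleOne Γ₁ c₁) :
    ∃ a : Γ → W₁, IsTwistedEquivariant c₁ a := by
  obtain ⟨r, hr⟩ := exists_equivariant_retraction Γ₁
  refine ⟨c₁ ∘ r, fun g₁ γ => ?_⟩
  change c₁ (r _) = c₁ g₁ * g₁ • c₁ (r γ)
  rw [hr, hc₁]

theorem IsTwistedEquivariant.isCocycleOne {c₁ : Γ₁ → W₁} {a : Γ → W₁}
    (ha : IsTwistedEquivariant c₁ a) : IsCocycleOne Γ₁ c₁ := by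
  intro σ τ
  have h := ha (σ * τ) 1
  rw [Subgroup.coe_mul, mul_assoc, ha σ, ha τ, smul_mul', mul_smul, ← mul_assoc] at h
  exact (mul_right_cancel h).symm

theorem IsTwistedEquivariant.isCocycleInd {c₁ : Γ₁ → W₁} {a : Γ → W₁}
    (ha : IsTwistedEquivariant c₁ a) : IsCocycleInd Γ₁ W₁ (cocycleOf a) := by
  refine ⟨fun σ g₁ γ => ?_, fun σ τ => funext fun γ => ?_⟩
  · change (a (g₁ * γ))⁻¹ * a (g₁ * γ * σ) = g₁ • ((a γ)⁻¹ * a (γ * σ))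
    rw [mul_assoc, ha, ha, smul_mul', smul_inv']
    group
  · simp only [cocycleOf, actInd, Pi.mul_apply, mul_assoc]
    group

theorem IsTwistedEquivariant.cohomologousOne_shapiro {c₁ : Γ₁ → W₁} {a : Γ → W₁}
    (ha : IsTwistedEquivariant c₁ a) : CohomologousOne (shapiro Γ₁ (cocycleOf a)) c₁ := by
  refine ⟨(a 1)⁻¹, fun τ => ?_⟩
  have h := ha τ 1
  rw [mul_one] at h
  simp only [shapiro, cocycleOf, one_mul, h, smul_inv']
  group

theorem IsTwistedEquivariant.cohomologousInd {c₁ c₁' : Γ₁ → W₁} {a a' : Γ → W₁}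
    (ha : IsTwistedEquivariant c₁ a) (ha' : IsTwistedEquivariant c₁' a')
    (h : CohomologousOne c₁ c₁') : CohomologousInd Γ₁ W₁ (cocycleOf a) (cocycleOf a') := by
  obtain ⟨m₀, hm₀⟩ := h
  refine ⟨fun γ => (a γ)⁻¹ * m₀ * a' γ, fun g₁ γ => ?_, fun σ => funext fun γ => ?_⟩
  · change (a (g₁ * γ))⁻¹ * m₀ * a' (g₁ * γ) = g₁ • ((a γ)⁻¹ * m₀ * a' γ)
    rw [ha, ha', hm₀, smul_mul', smul_mul', smul_inv']
    group
  · simp only [cocycleOf, actInd, Pi.mul_apply, Pi.inv_apply]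
    group

variable {c : Γ → Γ → W₁}

theorem IsCocycleInd.apply_mul_one (hc : IsCocycleInd Γ₁ W₁ c) (σ τ : Γ) :
    c (σ * τ) 1 = c σ 1 * c τ σ := by
  simpa only [Pi.mul_apply, actInd, one_mul] using congrFun (hc.2 σ τ) 1

theorem IsCocycleInd.eq_cocycleOf (hc : IsCocycleInd Γ₁ W₁ c) :
    c = cocycleOf (fun γ => c γ 1) := by
  funext σ γ
  rw [cocycleOf, hc.apply_mul_one, inv_mul_cancel_left]

theorem IsCocycleInd.isTwistedEquivariant (hc : IsCocycleInd Γ₁ W₁ c) :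
    IsTwistedEquivariant (shapiro Γ₁ c) (fun γ => c γ 1) := by
  intro g₁ γ
  have h := hc.1 γ g₁ 1
  rw [mul_one] at h
  change c (g₁ * γ) 1 = c g₁ 1 * g₁ • c γ 1
  rw [hc.apply_mul_one, h]

theorem CohomologousInd.cohomologousOne_shapiro {c c' : Γ → Γ → W₁}
    (h : CohomologousInd Γ₁ W₁ c c') :
    CohomologousOne (shapiro Γ₁ c) (shapiro Γ₁ c') := by
  obtain ⟨m, hm, hrel⟩ := h
  refine ⟨m 1, fun τ => ?_⟩
  have hτ := hm τ 1
  rw [mul_one] at hτ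
  simpa only [shapiro, Pi.mul_apply, Pi.inv_apply, actInd, one_mul, hτ] using
    congrFun (hrel τ) 1

end

theorem stmt_16_general {Γ W₁ : Type*} [Group Γ] [Group W₁] (Γ₁ : Subgroup Γ)
    [MulDistribMulAction Γ₁ W₁] :
    (∀ c : Γ → Γ → W₁, IsCocycleInd Γ₁ W₁ c → IsCocycleOne Γ₁ (shapiro Γ₁ c)) ∧
    (∀ c c' : Γ → Γ → W₁, IsCocycleInd Γ₁ W₁ c → IsCocycleInd Γ₁ W₁ c' →
      (CohomologousInd Γ₁ W₁ c c' ↔ CohomologousOne (shapiro Γ₁ c) (shapiro Γ₁ c'))) ∧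
    (∀ c₁ : Γ₁ → W₁, IsCocycleOne Γ₁ c₁ →
      ∃ c : Γ → Γ → W₁, IsCocycleInd Γ₁ W₁ c ∧ CohomologousOne (shapiro Γ₁ c) c₁) := by
  refine ⟨fun c hc => hc.isTwistedEquivariant.isCocycleOne,
    fun c c' hc hc' => ⟨CohomologousInd.cohomologousOne_shapiro, fun h => ?_⟩, fun c₁ hc₁ => ?_⟩
  · rw [hc.eq_cocycleOf, hc'.eq_cocycleOf]
    exact hc.isTwistedEquivariant.cohomologousInd hc'.isTwistedEquivariant h
  · obtain ⟨a, ha⟩ := exists_isTwistedEquivariant hc₁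
    exact ⟨cocycleOf a, ha.isCocycleInd, ha.cohomologousOne_shapiro⟩

/-- Shapiro's lemma for nonabelian first cohomology: the map
`c ↦ (τ ↦ c τ (e))` induces a bijection
`H¹(Γ, I_{Γ₁}^Γ(W₁)) ≃ H¹(Γ₁, W₁)`: it sends cocycles to cocycles, two cocycles are
cohomologous iff their images are, and every `W₁`-valued cocycle of `Γ₁` arises up to
cohomology. -/
theorem stmt_16 {Γ W₁ : Type*} [Group Γ] [Group W₁] (Γ₁ : Subgroup Γ)
    [Γ₁.FiniteIndex] [MulDistribMulAction Γ₁ W₁] :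
    (∀ c : Γ → Γ → W₁, IsCocycleInd Γ₁ W₁ c → IsCocycleOne Γ₁ (shapiro Γ₁ c)) ∧
    (∀ c c' : Γ → Γ → W₁, IsCocycleInd Γ₁ W₁ c → IsCocycleInd Γ₁ W₁ c' →
      (CohomologousInd Γ₁ W₁ c c' ↔ CohomologousOne (shapiro Γ₁ c) (shapiro Γ₁ c'))) ∧
    (∀ c₁ : Γ₁ → W₁, IsCocycleOne Γ₁ c₁ →
      ∃ c : Γ → Γ → W₁, IsCocycleInd Γ₁ W₁ c ∧ CohomologousOne (shapiro Γ₁ c) c₁) :=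
  stmt_16_general Γ₁
end
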